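/- Suppose columns of A in R^{d x k} have unit norm, every subset S of columns of size L has ||A_S|| <= 1 + delta (with delta = o(1)), and 2 < p <= 3. Then for any unit vector u, letting S be the set of L indices i maximizing |<a_i, u>|, we have sum_{i in S} |<a_i,u>|^2 <= (1+delta)^2, every i not in S satisfies |<a_i,u>| <= (1+delta)*2/sqrt(L), and hence ||A^T u||_p^p <= (1+delta)^{p} + ((1+delta)*2/sqrt(L))^{p-2} * ||A^T u||_2^2. -/
import Mathlib


open Finset RealInnerProductSpace

/-- Incoherence implies a 2→p norm bound: if every `L`-column submatrix of `A`
has spectral norm at most `1+δ`, then for any unit `u`, taking `S` to be the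
`L` indices maximizing `|⟨aᵢ,u⟩|`:
(a) `∑_{i∈S} ⟨aᵢ,u⟩² ≤ (1+δ)²`,
(b) `|⟨aᵢ,u⟩| ≤ (1+δ)·2/√L` for `i ∉ S`, and
(c) `‖Aᵀu‖_p^p ≤ (1+δ)^p + ((1+δ)·2/√L)^{p-2} ‖Aᵀu‖₂²`. -/
theorem two_to_p_norm_of_incoherence
    (d k L : ℕ) (hL : 1 ≤ L) (hLk : L ≤ k)
    (a : Fin k → EuclideanSpace ℝ (Fin d)) (ha : ∀ i, ‖a i‖ = 1)
    (δ : ℝ) (hδ : 0 ≤ δ)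
    (hsub : ∀ S : Finset (Fin k), S.card = L →
      ∀ x : EuclideanSpace ℝ (Fin d), ‖x‖ = 1 →
        Real.sqrt (∑ i ∈ S, ⟪a i, x⟫ ^ 2) ≤ 1 + δ)
    (p : ℝ) (hp : 2 < p) (hp3 : p ≤ 3)
    (u : EuclideanSpace ℝ (Fin d)) (hu : ‖u‖ = 1)
    (S : Finset (Fin k)) (hScard : S.card = L)
    (hStop : ∀ i ∈ S, ∀ j ∉ S, |⟪a j, u⟫| ≤ |⟪a i, u⟫|) :
    (∑ i ∈ S, ⟪a i, u⟫ ^ 2 ≤ (1 + δ) ^ 2) ∧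
    (∀ i ∉ S, |⟪a i, u⟫| ≤ (1 + δ) * 2 / Real.sqrt L) ∧
    (∑ i, |⟪a i, u⟫| ^ p ≤
      (1 + δ) ^ p + ((1 + δ) * 2 / Real.sqrt L) ^ (p - 2) * ∑ i, ⟪a i, u⟫ ^ 2) := by

  classical
  set x : Fin k → ℝ := fun i => ⟪a i, u⟫ with hx
  have hxabs : ∀ i, |x i| ≤ 1 := by
    intro i
    calc |x i| ≤ ‖a i‖ * ‖u‖ := abs_real_inner_le_norm _ _
    _ = 1 := by rw [ha i, hu]; ring
  -- part (a)
  have hsumS : ∑ i ∈ S, x i ^ 2 ≤ (1 + δ) ^ 2 := by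
    have h := hsub S hScard u hu
    have hnn : 0 ≤ ∑ i ∈ S, x i ^ 2 := Finset.sum_nonneg fun i _ => sq_nonneg _
    have := pow_le_pow_left₀ (Real.sqrt_nonneg _) h 2
    rwa [Real.sq_sqrt hnn] at this
  have hδ1 : (1:ℝ) ≤ 1 + δ := by linarith
  have hLpos : (0:ℝ) < Real.sqrt L := by
    apply Real.sqrt_pos.mpr
    exact_mod_cast Nat.lt_of_lt_of_le Nat.zero_lt_one hL
  set c : ℝ := (1 + δ) * 2 / Real.sqrt L with hc
  have hcpos : 0 < c := by positivity
  -- part (b)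
  have hb : ∀ i ∉ S, |x i| ≤ c := by
    intro i hi
    have hL2 : (L : ℝ) * x i ^ 2 ≤ ∑ j ∈ S, x j ^ 2 := by
      have : ∀ j ∈ S, x i ^ 2 ≤ x j ^ 2 := fun j hj => by
        have := hStop j hj i hi
        nlinarith [abs_nonneg (x i), abs_nonneg (x j), sq_abs (x i), sq_abs (x j)]
      calc (L : ℝ) * x i ^ 2 = ∑ _j ∈ S, x i ^ 2 := by
            rw [Finset.sum_const, hScard]; simp [mul_comm]
      _ ≤ ∑ j ∈ S, x j ^ 2 := Finset.sum_le_sum this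
    have hsq : (|x i| * Real.sqrt L) ^ 2 ≤ (1 + δ) ^ 2 := by
      have hL0 : (0:ℝ) ≤ L := Nat.cast_nonneg _
      rw [mul_pow, sq_abs, Real.sq_sqrt hL0]
      nlinarith [hsumS]
    have h1 : |x i| * Real.sqrt L ≤ 1 + δ := by
      nlinarith [abs_nonneg (x i), hLpos, mul_nonneg (abs_nonneg (x i)) hLpos.le]
    have : |x i| ≤ (1 + δ) / Real.sqrt L := by
      rw [le_div_iff₀ hLpos]; exact h1
    calc |x i| ≤ (1 + δ) / Real.sqrt L := this
    _ ≤ c := by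
        rw [hc, div_le_div_iff₀ hLpos hLpos]
        nlinarith [hLpos]
  refine ⟨hsumS, hb, ?_⟩
  -- part (c)
  have hp2 : (0:ℝ) ≤ p - 2 := by linarith
  have key1 : ∑ i ∈ S, |x i| ^ p ≤ (1 + δ) ^ p := by
    have h1 : ∑ i ∈ S, |x i| ^ p ≤ ∑ i ∈ S, x i ^ 2 := by
      apply Finset.sum_le_sum
      intro i _
      rcases eq_or_lt_of_le (abs_nonneg (x i)) with h0 | h0
      · rw [← h0, Real.zero_rpow (by linarith : p ≠ 0), ← sq_abs, ← h0]
        norm_num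
      · have := Real.rpow_le_rpow_of_exponent_ge h0 (hxabs i) (by linarith : (2:ℝ) ≤ p)
        calc |x i| ^ p ≤ |x i| ^ (2:ℝ) := this
        _ = x i ^ 2 := by
            rw [show ((2:ℝ) = ((2:ℕ):ℝ)) by norm_num, Real.rpow_natCast, sq_abs]
    have h2 : (1 + δ) ^ (2:ℝ) ≤ (1 + δ) ^ p :=
      Real.rpow_le_rpow_of_exponent_le hδ1 (by linarith)
    have h3 : (1 + δ) ^ ((2:ℝ)) = (1 + δ) ^ (2:ℕ) := by
      rw [show ((2:ℝ) = ((2:ℕ):ℝ)) by norm_num, Real.rpow_natCast]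
    rw [h3] at h2
    linarith [hsumS]
  have key2 : ∑ i ∈ Sᶜ, |x i| ^ p ≤ c ^ (p - 2) * ∑ i, x i ^ 2 := by
    have h1 : ∑ i ∈ Sᶜ, |x i| ^ p ≤ ∑ i ∈ Sᶜ, c ^ (p - 2) * x i ^ 2 := by
      apply Finset.sum_le_sum
      intro i hi
      have hiS : i ∉ S := Finset.mem_compl.mp hi
      have hsplit : |x i| ^ p = |x i| ^ (p - 2) * |x i| ^ (2:ℝ) := by
        rw [← Real.rpow_add' (abs_nonneg _) (by ring_nf; linarith : p - 2 + 2 ≠ 0)]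
        ring_nf
      rw [hsplit]
      have h2 : |x i| ^ (p - 2) ≤ c ^ (p - 2) :=
        Real.rpow_le_rpow (abs_nonneg _) (hb i hiS) hp2
      have h3 : |x i| ^ ((2:ℝ)) = x i ^ 2 := by
        rw [show ((2:ℝ) = ((2:ℕ):ℝ)) by norm_num, Real.rpow_natCast, sq_abs]
      rw [h3]
      exact mul_le_mul_of_nonneg_right h2 (sq_nonneg _)
    calc ∑ i ∈ Sᶜ, |x i| ^ p ≤ ∑ i ∈ Sᶜ, c ^ (p - 2) * x i ^ 2 := h1
    _ = c ^ (p - 2) * ∑ i ∈ Sᶜ, x i ^ 2 := by rw [Finset.mul_sum]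
    _ ≤ c ^ (p - 2) * ∑ i, x i ^ 2 := by
        apply mul_le_mul_of_nonneg_left _ (Real.rpow_nonneg hcpos.le _)
        exact Finset.sum_le_sum_of_subset_of_nonneg (Finset.subset_univ _)
          (fun i _ _ => sq_nonneg _)
  have hsplit : ∑ i, |x i| ^ p = ∑ i ∈ S, |x i| ^ p + ∑ i ∈ Sᶜ, |x i| ^ p :=
    (Finset.sum_add_sum_compl S _).symm
  rw [hsplit]
  exact add_le_add key1 key2
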